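/- arXiv:0802.3614 — 3 statements merged into one kernel-verified Lean document; each statement's English description precedes it below -/
import Mathlib

section
/- Let A be a real n×n matrix that is invertible and has an algebraically simple eigenvalue iω with ω > 0, with right eigenvector q ∈ ℂⁿ and left eigenvector p ∈ ℂⁿ (A*p = −iω p) normalized so p*q = 1. Let J₁ be a real n×2 matrix, v ∈ ℝ², let A₁ : ℂⁿ × ℝ² → ℂⁿ and B : ℂⁿ × ℂⁿ → ℂⁿ be bilinear maps. Then the pair of equations A h₀₀ = −J₁ v and (A − iω Iₙ) h₁₀ = γ q − A₁(q, v) − B(q, h₀₀) has a solution (h₀₀, h₁₀, γ) ∈ ℝⁿ × ℂⁿ × ℂ, with h₀₀ uniquely determined as h₀₀ = −A⁻¹J₁v, and the solvability of the second equation holds if and only if γ = p*(A₁(q, v) + B(q, −A⁻¹J₁v)). -/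
/-! The first equation is solved by inverting `A`. For the second, `A - iω` has a one-dimensional
kernel (the geometric multiplicity of `iω` lies between 1 and its algebraic multiplicity 1), so its
range is a hyperplane. That range lies in the kernel of `x ↦ p* x` because `p` is a left eigenvector,
hence equals it: a right-hand side is attainable iff `p*` kills it. With `p* q = 1` this pins `γ`. -/

open Matrix Polynomial Module

namespace LinearMap

variable {K V : Type*} [Field K] [AddCommGroup V] [Module K V] [FiniteDimensional K V]

theorem range_eq_ker_of_comp_eq_zero_of_finrank_ker_eq_one {φ : End K V} {ℓ : Dual K V}
    (hℓ : ℓ ≠ 0) (hℓφ : ℓ ∘ₗ φ = 0) (hφ : finrank K (ker φ) = 1) :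
    range φ = ker ℓ := by
  refine Submodule.eq_of_le_of_finrank_eq (range_le_ker_iff.mpr hℓφ) ?_
  have := finrank_range_add_finrank_ker φ
  have := ℓ.finrank_ker_add_one_of_ne_zero hℓ
  omega

theorem finrank_eigenspace_eq_one_of_rootMultiplicity_eq_one {φ : End K V} {μ : K}
    (h : φ.charpoly.rootMultiplicity μ = 1) : finrank K (φ.eigenspace μ) = 1 := by
  have hroot : φ.HasEigenvalue μ := by
    rw [Module.End.hasEigenvalue_iff_isRoot_charpoly,
      ← rootMultiplicity_pos φ.charpoly_monic.ne_zero, h]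
    exact one_pos
  refine le_antisymm (h ▸ φ.finrank_eigenspace_le μ) ?_
  exact Submodule.one_le_finrank_iff.mpr hroot

end LinearMap

namespace Matrix

variable {K ι : Type*} [Field K] [Fintype ι] [DecidableEq ι]

theorem exists_mulVec_sub_smul_one_eq_iff_dotProduct_eq_zero {M : Matrix ι ι K} {μ : K}
    (hμ : M.charpoly.rootMultiplicity μ = 1) {w : ι → K} (hw : w ᵥ* M = μ • w) (hw0 : w ≠ 0)
    (b : ι → K) : (∃ x, (M - μ • 1) *ᵥ x = b) ↔ w ⬝ᵥ b = 0 := by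
  have hker : finrank K (LinearMap.ker (toLin' (M - μ • 1))) = 1 := by
    rw [← charpoly_toLin'] at hμ
    rw [map_sub, map_smul, toLin'_one, ← Module.End.one_eq_id, ← Module.End.eigenspace_def]
    exact LinearMap.finrank_eigenspace_eq_one_of_rootMultiplicity_eq_one hμ
  have hcomp : dotProductEquiv K ι w ∘ₗ toLin' (M - μ • 1) = 0 := by
    refine LinearMap.ext fun x => ?_
    rw [LinearMap.comp_apply, toLin'_apply, dotProductEquiv_apply_apply, dotProduct_mulVec,
      vecMul_sub, hw, vecMul_smul, vecMul_one, sub_self, zero_dotProduct, LinearMap.zero_apply]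
  have hrange := LinearMap.range_eq_ker_of_comp_eq_zero_of_finrank_ker_eq_one
    ((dotProductEquiv K ι).map_ne_zero_iff.mpr hw0) hcomp hker
  simpa only [LinearMap.mem_range, toLin'_apply, LinearMap.mem_ker, dotProductEquiv_apply_apply]
    using SetLike.ext_iff.mp hrange b

end Matrix

theorem generalized_hopf_parameter_equations_general
    {n : ℕ} (A : Matrix (Fin n) (Fin n) ℝ) (hA : IsUnit A.det)
    (ω : ℝ)
    (hsimple : (A.map Complex.ofReal).charpoly.rootMultiplicity (Complex.I * ω) = 1)
    (q p : Fin n → ℂ)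
    (hp : (A.map Complex.ofReal)ᴴ.mulVec p = (-(Complex.I * ω)) • p)
    (hpq : star p ⬝ᵥ q = 1)
    (J₁ : Matrix (Fin n) (Fin 2) ℝ) (v : Fin 2 → ℝ)
    (A₁ : (Fin n → ℂ) →ₗ[ℝ] (Fin 2 → ℝ) →ₗ[ℝ] (Fin n → ℂ))
    (B : (Fin n → ℂ) →ₗ[ℂ] (Fin n → ℂ) →ₗ[ℂ] (Fin n → ℂ)) :
    let h₀₀ : Fin n → ℝ := -(A⁻¹.mulVec (J₁.mulVec v))
    let h₀₀c : Fin n → ℂ := fun i => (h₀₀ i : ℂ)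
    -- h₀₀ solves the first equation
    (A.mulVec h₀₀ = -(J₁.mulVec v)) ∧
    -- and it is the unique solution
    (∀ h : Fin n → ℝ, A.mulVec h = -(J₁.mulVec v) → h = h₀₀) ∧
    -- the pair of equations has a solution (h₀₀, h₁₀, γ)
    (∃ (γ : ℂ) (h₁₀ : Fin n → ℂ),
      (A.map Complex.ofReal - (Complex.I * ω) • (1 : Matrix (Fin n) (Fin n) ℂ)).mulVec h₁₀
        = γ • q - A₁ q v - B q h₀₀c) ∧
    -- solvability of the second equation holds iff γ = p*(A₁(q,v) + B(q, -A⁻¹J₁v))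
    (∀ γ : ℂ,
      (∃ h₁₀ : Fin n → ℂ,
        (A.map Complex.ofReal - (Complex.I * ω) • (1 : Matrix (Fin n) (Fin n) ℂ)).mulVec h₁₀
          = γ • q - A₁ q v - B q h₀₀c) ↔
      γ = star p ⬝ᵥ (A₁ q v + B q h₀₀c)) := by
  intro h₀₀ h₀₀c
  have hsolves : A *ᵥ h₀₀ = -(J₁ *ᵥ v) := by
    rw [mulVec_neg, mulVec_mulVec, mul_nonsing_inv A hA, one_mulVec]
  have hleft : star p ᵥ* A.map Complex.ofReal = (Complex.I * ω) • star p := by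
    have := congrArg star hp
    rw [star_mulVec, conjTranspose_conjTranspose] at this
    simpa [Complex.star_def] using this
  have hp0 : star p ≠ 0 := by
    rintro h
    rw [h, zero_dotProduct] at hpq
    exact zero_ne_one hpq
  have hsolvable : ∀ γ : ℂ,
      (∃ h₁₀ : Fin n → ℂ,
        (A.map Complex.ofReal - (Complex.I * ω) • (1 : Matrix (Fin n) (Fin n) ℂ)) *ᵥ h₁₀
          = γ • q - A₁ q v - B q h₀₀c) ↔
      γ = star p ⬝ᵥ (A₁ q v + B q h₀₀c) := by
    intro γ
    rw [exists_mulVec_sub_smul_one_eq_iff_dotProduct_eq_zero hsimple hleft hp0, dotProduct_sub,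
      dotProduct_sub, dotProduct_smul, hpq, smul_eq_mul, mul_one, sub_sub, ← dotProduct_add,
      sub_eq_zero]
  exact ⟨hsolves,
    fun h hh => mulVec_injective_iff_isUnit.mpr ((isUnit_iff_isUnit_det A).mpr hA)
      (hh.trans hsolves.symm),
    ⟨_, (hsolvable _).mpr rfl⟩, hsolvable⟩

/-- First-order (in parameters) equations of the homological equation at a generalized
Hopf point: `A h₀₀ = -J₁ v` has the unique solution `h₀₀ = -A⁻¹J₁v`, and
`(A - iω I) h₁₀ = γ q - A₁(q,v) - B(q,h₀₀)` is solvable iff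
`γ = p*(A₁(q,v) + B(q, -A⁻¹J₁v))`. -/
theorem generalized_hopf_parameter_equations
    {n : ℕ} (A : Matrix (Fin n) (Fin n) ℝ) (hA : IsUnit A.det)
    (ω : ℝ) (hω : 0 < ω)
    (hsimple : (A.map Complex.ofReal).charpoly.rootMultiplicity (Complex.I * ω) = 1)
    (q p : Fin n → ℂ)
    (hq : (A.map Complex.ofReal).mulVec q = (Complex.I * ω) • q) (hq0 : q ≠ 0)
    (hp : (A.map Complex.ofReal)ᴴ.mulVec p = (-(Complex.I * ω)) • p)
    (hpq : star p ⬝ᵥ q = 1)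
    (J₁ : Matrix (Fin n) (Fin 2) ℝ) (v : Fin 2 → ℝ)
    (A₁ : (Fin n → ℂ) →ₗ[ℝ] (Fin 2 → ℝ) →ₗ[ℝ] (Fin n → ℂ))
    (B : (Fin n → ℂ) →ₗ[ℂ] (Fin n → ℂ) →ₗ[ℂ] (Fin n → ℂ)) :
    let h₀₀ : Fin n → ℝ := -(A⁻¹.mulVec (J₁.mulVec v))
    let h₀₀c : Fin n → ℂ := fun i => (h₀₀ i : ℂ)
    -- h₀₀ solves the first equation
    (A.mulVec h₀₀ = -(J₁.mulVec v)) ∧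
    -- and it is the unique solution
    (∀ h : Fin n → ℝ, A.mulVec h = -(J₁.mulVec v) → h = h₀₀) ∧
    -- the pair of equations has a solution (h₀₀, h₁₀, γ)
    (∃ (γ : ℂ) (h₁₀ : Fin n → ℂ),
      (A.map Complex.ofReal - (Complex.I * ω) • (1 : Matrix (Fin n) (Fin n) ℂ)).mulVec h₁₀
        = γ • q - A₁ q v - B q h₀₀c) ∧
    -- solvability of the second equation holds iff γ = p*(A₁(q,v) + B(q, -A⁻¹J₁v))
    (∀ γ : ℂ,
      (∃ h₁₀ : Fin n → ℂ,
        (A.map Complex.ofReal - (Complex.I * ω) • (1 : Matrix (Fin n) (Fin n) ℂ)).mulVec h₁₀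
          = γ • q - A₁ q v - B q h₀₀c) ↔
      γ = star p ⬝ᵥ (A₁ q v + B q h₀₀c)) :=
  generalized_hopf_parameter_equations_general A hA ω hsimple q p hp hpq J₁ v A₁ B
end

section
/- In the truncated zero-Hopf amplitude system, evaluate the right-hand side at the NS predictor point (x, ρ) = (x₀(ε), ε) with parameters β₁(ε), β₂(ε). Then the following hold exactly: (i) the coefficient identity β₂(ε) + a₁₁₀x₀(ε) + a₀₂₁ε² = 0 for all ε; (ii) the x-component of the right-hand side equals f₂₀₀x₀(ε)² + f₃₀₀x₀(ε)³ + f₁₁₁x₀(ε)ε², a polynomial in ε all of whose nonzero terms have degree at least 4; and (iii) the ρ-component equals ε·a₂₁₀x₀(ε)², a polynomial in ε all of whose nonzero terms have degree at least 5. In particular, both components are O(ε⁴) as ε → 0, so the predictor point is an equilibrium of the amplitude system up to fourth-order terms. -/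
open Asymptotics

/-- At the zero-Hopf NS predictor point the truncated amplitude system satisfies:
(i) `β₂(ε) + a₁₁₀x₀(ε) + a₀₂₁ε² = 0`;
(ii) the x-component equals `f₂₀₀x₀² + f₃₀₀x₀³ + f₁₁₁x₀ε²`, a polynomial in `ε` with all
nonzero terms of degree ≥ 4;
(iii) the ρ-component equals `ε·a₂₁₀x₀²`, a polynomial in `ε` with all nonzero terms of
degree ≥ 5. In particular both components are `O(ε⁴)` as `ε → 0`. -/
theorem zero_hopf_ns_predictor_approximate_equilibrium
    (f200 f011 f300 f111 a110 a210 a021 : ℝ) (hf : f200 ≠ 0) :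
    let x₀ : ℝ → ℝ := fun ε => -((f111 + 2 * a021) / (2 * f200)) * ε ^ 2
    let β₁ : ℝ → ℝ := fun ε => -f011 * ε ^ 2
    let β₂ : ℝ → ℝ := fun ε =>
      ((2 * (a110 - f200) * a021 + a110 * f111) / (2 * f200)) * ε ^ 2
    -- x-component of the right-hand side at the predictor point
    let X : ℝ → ℝ := fun ε => β₁ ε + f200 * (x₀ ε) ^ 2 + f011 * ε ^ 2
      + f300 * (x₀ ε) ^ 3 + f111 * (x₀ ε) * ε ^ 2
    -- ρ-component of the right-hand side at the predictor point
    let R : ℝ → ℝ := fun ε =>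
      ε * (β₂ ε + a110 * (x₀ ε) + a210 * (x₀ ε) ^ 2 + a021 * ε ^ 2)
    -- (i) coefficient identity
    (∀ ε : ℝ, β₂ ε + a110 * (x₀ ε) + a021 * ε ^ 2 = 0) ∧
    -- (ii) x-component
    (∀ ε : ℝ, X ε = f200 * (x₀ ε) ^ 2 + f300 * (x₀ ε) ^ 3 + f111 * (x₀ ε) * ε ^ 2) ∧
    (∃ P : Polynomial ℝ, (∀ ε : ℝ, X ε = P.eval ε) ∧ ∀ k < 4, P.coeff k = 0) ∧
    -- (iii) ρ-component
    (∀ ε : ℝ, R ε = ε * (a210 * (x₀ ε) ^ 2)) ∧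
    (∃ Q : Polynomial ℝ, (∀ ε : ℝ, R ε = Q.eval ε) ∧ ∀ k < 5, Q.coeff k = 0) ∧
    -- both components are O(ε⁴) as ε → 0
    (X =O[nhds 0] fun ε : ℝ => ε ^ 4) ∧
    (R =O[nhds 0] fun ε : ℝ => ε ^ 4) := by
  intro x₀ β₁ β₂ X R
  set c : ℝ := -((f111 + 2 * a021) / (2 * f200)) with hc
  have hi : ∀ ε : ℝ, β₂ ε + a110 * (x₀ ε) + a021 * ε ^ 2 = 0 := by
    intro ε
    simp only [β₂, x₀, hc]
    field_simp
    ring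
  have hX : ∀ ε : ℝ, X ε = (f200 * c ^ 2 + f111 * c) * ε ^ 4 + f300 * c ^ 3 * ε ^ 6 := by
    intro ε; simp only [X, β₁, x₀, hc]; ring
  have hR0 : ∀ ε : ℝ, R ε = ε * (a210 * (x₀ ε) ^ 2) := by
    intro ε
    have h := hi ε
    simp only [R]
    linear_combination ε * h
  have hR : ∀ ε : ℝ, R ε = a210 * c ^ 2 * ε ^ 5 := by
    intro ε
    rw [hR0 ε]
    simp only [x₀, hc]
    ring
  refine ⟨hi, ?_, ?_, ?_, ?_, ?_, ?_⟩
  · intro ε; simp only [X, β₁]; ring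
  · refine ⟨Polynomial.C (f200 * c ^ 2 + f111 * c) * Polynomial.X ^ 4
      + Polynomial.C (f300 * c ^ 3) * Polynomial.X ^ 6, fun ε => by simp [hX ε], ?_⟩
    intro k hk
    interval_cases k <;>
      simp [Polynomial.coeff_mul_X_pow', Polynomial.coeff_add]
  · exact hR0
  · refine ⟨Polynomial.C (a210 * c ^ 2) * Polynomial.X ^ 5, fun ε => by simp [hR ε], ?_⟩
    intro k hk
    interval_cases k <;>
      simp [Polynomial.coeff_mul_X_pow', Polynomial.coeff_add]
  · have h1 : X = fun ε => ε ^ 4 * ((f200 * c ^ 2 + f111 * c) + f300 * c ^ 3 * ε ^ 2) := by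
      funext ε; rw [hX ε]; ring
    rw [h1]
    have h2 : Continuous (fun ε : ℝ => (f200 * c ^ 2 + f111 * c) + f300 * c ^ 3 * ε ^ 2) := by
      fun_prop
    have := (isBigO_refl (fun ε : ℝ => ε ^ 4) (nhds 0)).mul ((h2.tendsto 0).isBigO_one ℝ)
    simpa using this
  · have h1 : R = fun ε => ε ^ 4 * (a210 * c ^ 2 * ε) := by
      funext ε; rw [hR ε]; ring
    rw [h1]
    have h2 : Continuous (fun ε : ℝ => a210 * c ^ 2 * ε) := by fun_prop
    have := (isBigO_refl (fun ε : ℝ => ε ^ 4) (nhds 0)).mul ((h2.tendsto 0).isBigO_one ℝ)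
    simpa using this
end

section
/- In the truncated zero-Hopf amplitude system, let D(ε) denote the determinant of the Jacobian matrix of the right-hand side evaluated at the NS predictor point (x, ρ) = (x₀(ε), ε) with parameters β₁(ε), β₂(ε). Then D(ε)/ε² → −2a₁₁₀f₀₁₁ as ε → 0. Consequently, if a₁₁₀ f₀₁₁ < 0 (the paper's condition Re(g₁₁₀)f₀₁₁ < 0 for a Neimark–Sacker curve to emanate from the zero-Hopf point), then for all sufficiently small ε > 0 one has D(ε) > 0 and (trace)² − 4D(ε) < 0, so the Jacobian at the predictor point has a pair of non-real complex-conjugate eigenvalues. -/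
/-!
At the predictor, `x₀ = O(ε²)` and `β₂` is tuned so that both diagonal entries of the Jacobian
are `O(ε²)`, while the off-diagonal ones are `ε (2 f₀₁₁ + O(ε²))` and `ε (a₁₁₀ + O(ε²))`.
For any matrix `[[ε² p, ε q], [ε r, ε² s]]` one has `det = ε² (ε² p s - q r)` and
`tr² - 4 det = ε² (ε² (p - s)² + 4 q r)`, so `det / ε² → -q(0) r(0) = -2 a₁₁₀ f₀₁₁`, and
`q(0) r(0) < 0` makes `det > 0` and the discriminant negative for small `ε ≠ 0`. A real
quadratic with negative discriminant has the conjugate non-real roots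
`tr / 2 ± i √(4 det - tr²) / 2`.
-/

open Matrix Polynomial ComplexConjugate Filter Topology

theorem Complex.exists_im_ne_zero_sq_sub_mul_add_eq_zero {t d : ℝ} (h : t ^ 2 - 4 * d < 0) :
    ∃ μ : ℂ, μ.im ≠ 0 ∧ μ ^ 2 - t * μ + d = 0 := by
  have hpos : 0 < 4 * d - t ^ 2 := by linarith
  set w := √(4 * d - t ^ 2)
  have hw : w * w = 4 * d - t ^ 2 := Real.mul_self_sqrt hpos.le
  refine ⟨⟨t / 2, w / 2⟩, div_ne_zero (Real.sqrt_pos.mpr hpos).ne' two_ne_zero, ?_⟩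
  apply Complex.ext <;>
    simp only [pow_two, add_re, sub_re, mul_re, add_im, sub_im, mul_im, ofReal_re, ofReal_im,
      zero_mul, sub_zero, add_zero, zero_re, zero_im]
  · linear_combination (-1 / 4 : ℝ) * hw
  · ring

theorem Matrix.exists_isRoot_charpoly_map_ofReal_im_ne_zero (M : Matrix (Fin 2) (Fin 2) ℝ)
    (h : M.trace ^ 2 - 4 * M.det < 0) :
    ∃ μ : ℂ, μ.im ≠ 0 ∧ (M.map Complex.ofReal).charpoly.IsRoot μ ∧
      (M.map Complex.ofReal).charpoly.IsRoot (conj μ) := by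
  obtain ⟨μ, hμ, hroot⟩ := Complex.exists_im_ne_zero_sq_sub_mul_add_eq_zero h
  have hmap : (M.map Complex.ofReal).charpoly = M.charpoly.map (algebraMap ℝ ℂ) :=
    M.charpoly_map Complex.ofRealHom
  have haeval : aeval μ M.charpoly = 0 := by
    simpa [M.charpoly_fin_two] using hroot
  refine ⟨μ, hμ, ?_, ?_⟩ <;> rw [hmap, IsRoot, eval_map_algebraMap]
  · exact haeval
  · rw [aeval_conj, haeval, map_zero]

section ScaledMatrix

variable (ε p q r s : ℝ)

theorem Matrix.det_fin_two_scaled :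
    !![ε ^ 2 * p, ε * q; ε * r, ε ^ 2 * s].det = ε ^ 2 * (ε ^ 2 * p * s - q * r) := by
  rw [det_fin_two_of]; ring

theorem Matrix.trace_sq_sub_four_mul_det_fin_two_scaled :
    !![ε ^ 2 * p, ε * q; ε * r, ε ^ 2 * s].trace ^ 2
        - 4 * !![ε ^ 2 * p, ε * q; ε * r, ε ^ 2 * s].det
      = ε ^ 2 * (ε ^ 2 * (p - s) ^ 2 + 4 * q * r) := by
  rw [trace_fin_two_of, det_fin_two_of]; ring

end ScaledMatrix

section ScaledMatrixFamily

variable {p q r s : ℝ → ℝ}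

theorem tendsto_det_fin_two_scaled_div_sq (hp : ContinuousAt p 0) (hq : ContinuousAt q 0)
    (hr : ContinuousAt r 0) (hs : ContinuousAt s 0) :
    Tendsto (fun ε => !![ε ^ 2 * p ε, ε * q ε; ε * r ε, ε ^ 2 * s ε].det / ε ^ 2) (𝓝[≠] 0)
      (𝓝 (-(q 0 * r 0))) := by
  have hcont : ContinuousAt (fun ε => ε ^ 2 * p ε * s ε - q ε * r ε) 0 := by fun_prop
  have hlim := tendsto_nhdsWithin_of_tendsto_nhds (s := {0}ᶜ) hcont.tendsto
  rw [show (0 : ℝ) ^ 2 * p 0 * s 0 - q 0 * r 0 = -(q 0 * r 0) by ring] at hlim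
  refine hlim.congr' ?_
  filter_upwards [self_mem_nhdsWithin] with ε (hε : ε ≠ 0)
  rw [Matrix.det_fin_two_scaled]
  field_simp

theorem eventually_det_fin_two_scaled_pos_and_discr_neg (hp : ContinuousAt p 0)
    (hq : ContinuousAt q 0) (hr : ContinuousAt r 0) (hs : ContinuousAt s 0)
    (h : q 0 * r 0 < 0) :
    ∀ᶠ ε in 𝓝[≠] 0,
      0 < !![ε ^ 2 * p ε, ε * q ε; ε * r ε, ε ^ 2 * s ε].det ∧
      !![ε ^ 2 * p ε, ε * q ε; ε * r ε, ε ^ 2 * s ε].trace ^ 2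
        - 4 * !![ε ^ 2 * p ε, ε * q ε; ε * r ε, ε ^ 2 * s ε].det < 0 := by
  have hdet : ContinuousAt (fun ε => ε ^ 2 * p ε * s ε - q ε * r ε) 0 := by fun_prop
  have hdiscr : ContinuousAt (fun ε => ε ^ 2 * (p ε - s ε) ^ 2 + 4 * q ε * r ε) 0 := by
    fun_prop
  have hdet_pos := hdet.eventually (eventually_gt_nhds (show (0 : ℝ) < _ by linarith))
  have hdiscr_neg := hdiscr.eventually (eventually_lt_nhds (show _ < (0 : ℝ) by linarith))
  filter_upwards [nhdsWithin_le_nhds hdet_pos, nhdsWithin_le_nhds hdiscr_neg,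
    self_mem_nhdsWithin] with ε hdet_pos hdiscr_neg (hε : ε ≠ 0)
  rw [Matrix.trace_sq_sub_four_mul_det_fin_two_scaled, Matrix.det_fin_two_scaled]
  exact ⟨by positivity, mul_neg_of_pos_of_neg (by positivity) hdiscr_neg⟩

end ScaledMatrixFamily

section ZeroHopf

variable (f200 f011 f300 f111 a110 a210 a021 β₁ β₂ x ρ : ℝ)

theorem zeroHopf_jacobian_eq :
    !![deriv (fun x => β₁ + f200 * x ^ 2 + f011 * ρ ^ 2 + f300 * x ^ 3 + f111 * x * ρ ^ 2) x,
        deriv (fun ρ => β₁ + f200 * x ^ 2 + f011 * ρ ^ 2 + f300 * x ^ 3 + f111 * x * ρ ^ 2) ρ;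
       deriv (fun x => ρ * (β₂ + a110 * x + a210 * x ^ 2 + a021 * ρ ^ 2)) x,
        deriv (fun ρ => ρ * (β₂ + a110 * x + a210 * x ^ 2 + a021 * ρ ^ 2)) ρ]
      = !![2 * f200 * x + 3 * f300 * x ^ 2 + f111 * ρ ^ 2, 2 * f011 * ρ + 2 * f111 * x * ρ;
           ρ * (a110 + 2 * a210 * x), β₂ + a110 * x + a210 * x ^ 2 + 3 * a021 * ρ ^ 2] := by
  have h₁₁ : HasDerivAt
      (fun x => β₁ + f200 * x ^ 2 + f011 * ρ ^ 2 + f300 * x ^ 3 + f111 * x * ρ ^ 2)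
      (2 * f200 * x + 3 * f300 * x ^ 2 + f111 * ρ ^ 2) x :=
    (((((hasDerivAt_pow 2 x).const_mul f200).const_add β₁).add_const (f011 * ρ ^ 2)).add
      ((hasDerivAt_pow 3 x).const_mul f300) |>.add
      (((hasDerivAt_id x).const_mul f111).mul_const (ρ ^ 2))).congr_deriv (by push_cast; ring)
  have h₁₂ : HasDerivAt
      (fun ρ => β₁ + f200 * x ^ 2 + f011 * ρ ^ 2 + f300 * x ^ 3 + f111 * x * ρ ^ 2)
      (2 * f011 * ρ + 2 * f111 * x * ρ) ρ :=
    (((((hasDerivAt_pow 2 ρ).const_mul f011).const_add (β₁ + f200 * x ^ 2)).add_const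
      (f300 * x ^ 3)).add ((hasDerivAt_pow 2 ρ).const_mul (f111 * x))).congr_deriv
      (by push_cast; ring)
  have h₂₁ : HasDerivAt (fun x => ρ * (β₂ + a110 * x + a210 * x ^ 2 + a021 * ρ ^ 2))
      (ρ * (a110 + 2 * a210 * x)) x :=
    ((((((hasDerivAt_id x).const_mul a110).const_add β₂).add
      ((hasDerivAt_pow 2 x).const_mul a210)).add_const (a021 * ρ ^ 2)).const_mul ρ).congr_deriv
      (by push_cast; ring)
  have h₂₂ : HasDerivAt (fun ρ => ρ * (β₂ + a110 * x + a210 * x ^ 2 + a021 * ρ ^ 2))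
      (β₂ + a110 * x + a210 * x ^ 2 + 3 * a021 * ρ ^ 2) ρ :=
    ((hasDerivAt_id ρ).mul (((hasDerivAt_pow 2 ρ).const_mul a021).const_add
      (β₂ + a110 * x + a210 * x ^ 2))).congr_deriv (by push_cast [id]; ring)
  rw [h₁₁.deriv, h₁₂.deriv, h₂₁.deriv, h₂₂.deriv]

end ZeroHopf

/-- The determinant `D(ε)` of the Jacobian of the truncated zero-Hopf amplitude system at
the NS predictor point satisfies `D(ε)/ε² → -2a₁₁₀f₀₁₁` as `ε → 0`. If `a₁₁₀f₀₁₁ < 0`,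
then for all sufficiently small `ε > 0` one has `D(ε) > 0` and `trace² - 4D(ε) < 0`, so
the Jacobian has a pair of non-real complex-conjugate eigenvalues. -/
theorem zero_hopf_ns_predictor_determinant_and_complex_eigenvalues
    (f200 f011 f300 f111 a110 a210 a021 : ℝ) (hf : f200 ≠ 0) :
    let x₀ : ℝ → ℝ := fun ε => -((f111 + 2 * a021) / (2 * f200)) * ε ^ 2
    let β₁ : ℝ → ℝ := fun ε => -f011 * ε ^ 2
    let β₂ : ℝ → ℝ := fun ε =>
      ((2 * (a110 - f200) * a021 + a110 * f111) / (2 * f200)) * ε ^ 2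
    let F1 : ℝ → ℝ → ℝ → ℝ := fun ε x ρ =>
      β₁ ε + f200 * x ^ 2 + f011 * ρ ^ 2 + f300 * x ^ 3 + f111 * x * ρ ^ 2
    let F2 : ℝ → ℝ → ℝ → ℝ := fun ε x ρ =>
      ρ * (β₂ ε + a110 * x + a210 * x ^ 2 + a021 * ρ ^ 2)
    -- Jacobian matrix at the predictor point (x, ρ) = (x₀(ε), ε)
    let J : ℝ → Matrix (Fin 2) (Fin 2) ℝ := fun ε =>
      !![deriv (fun x => F1 ε x ε) (x₀ ε), deriv (fun ρ => F1 ε (x₀ ε) ρ) ε;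
         deriv (fun x => F2 ε x ε) (x₀ ε), deriv (fun ρ => F2 ε (x₀ ε) ρ) ε]
    let D : ℝ → ℝ := fun ε => (J ε).det
    let tr : ℝ → ℝ := fun ε => (J ε).trace
    Filter.Tendsto (fun ε : ℝ => D ε / ε ^ 2) (nhdsWithin 0 {(0 : ℝ)}ᶜ)
      (nhds (-2 * a110 * f011)) ∧
    (a110 * f011 < 0 → ∃ ε₀ > (0 : ℝ), ∀ ε : ℝ, 0 < ε → ε < ε₀ →
      0 < D ε ∧ (tr ε) ^ 2 - 4 * D ε < 0 ∧
      ∃ μ : ℂ, μ.im ≠ 0 ∧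
        ((J ε).map (Complex.ofReal)).charpoly.IsRoot μ ∧
        ((J ε).map (Complex.ofReal)).charpoly.IsRoot (starRingEnd ℂ μ)) := by
  intro x₀ β₁ β₂ F1 F2 J D tr
  set c := (f111 + 2 * a021) / (2 * f200)
  set p : ℝ → ℝ := fun ε => -2 * a021 + 3 * f300 * c ^ 2 * ε ^ 2
  set q : ℝ → ℝ := fun ε => 2 * f011 - 2 * f111 * c * ε ^ 2
  set r : ℝ → ℝ := fun ε => a110 - 2 * a210 * c * ε ^ 2
  set s : ℝ → ℝ := fun ε => 2 * a021 + a210 * c ^ 2 * ε ^ 2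
  have hJ : ∀ ε, J ε = !![ε ^ 2 * p ε, ε * q ε; ε * r ε, ε ^ 2 * s ε] := by
    intro ε
    rw [show J ε = _ from
      zeroHopf_jacobian_eq f200 f011 f300 f111 a110 a210 a021 (β₁ ε) (β₂ ε) (x₀ ε) ε]
    congrm !![?_, ?_; ?_, ?_] <;> simp only [x₀, β₂, p, q, r, s, c] <;> field_simp <;> ring
  have hp : ContinuousAt p 0 := by fun_prop
  have hq : ContinuousAt q 0 := by fun_prop
  have hr : ContinuousAt r 0 := by fun_prop
  have hs : ContinuousAt s 0 := by fun_prop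
  refine ⟨?_, fun hcond => ?_⟩
  · simp only [D, hJ]
    convert tendsto_det_fin_two_scaled_div_sq hp hq hr hs using 2
    simp only [q, r]; ring
  · have hqr : q 0 * r 0 < 0 := by simp only [q, r]; nlinarith
    obtain ⟨ε₀, hε₀, hsub⟩ := mem_nhdsGT_iff_exists_Ioo_subset.mp
      ((eventually_det_fin_two_scaled_pos_and_discr_neg hp hq hr hs hqr).filter_mono
        (nhdsGT_le_nhdsNE 0))
    refine ⟨ε₀, hε₀, fun ε hε hεε₀ => ?_⟩
    obtain ⟨hdet, hdiscr⟩ := hsub ⟨hε, hεε₀⟩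
    rw [← hJ ε] at hdet hdiscr
    exact ⟨hdet, hdiscr, (J ε).exists_isRoot_charpoly_map_ofReal_im_ne_zero hdiscr⟩
end
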